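/- For 0 < γ < 1, κ > 0 and t ∈ [0,1], one has ∫₀ᵗ (t-s)^(-γ) E_{1-γ}(κ s^(1-γ)) ds ≤ (Γ(1-γ)/κ) · E_{1-γ}(κ t^(1-γ)). -/

import Mathlib

/-!
Write `a = 1 - γ`. Expanding `E_a(κ s^a)` as a power series, the Beta integral turns the `k`-th term
of the integrand into `Γ(a)/κ` times the `(k+1)`-st term of the series of `E_a(κ t^a)`. The series
converges absolutely (ratio test, using the log-convexity of `Γ`), so sum and integral may be
exchanged, giving the identity `κ ∫₀ᵗ (t-s)^(a-1) E_a(κ s^a) ds = Γ(a) (E_a(κ t^a) - 1)`.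
-/

open Real MeasureTheory

/-- The Mittag-Leffler function `E_a(x) = ∑_{k≥0} x^k / Γ(a k + 1)`. -/
noncomputable def mittagLeffler (a x : ℝ) : ℝ := ∑' k : ℕ, x ^ k / Real.Gamma (a * k + 1)

theorem Real.Gamma_mul_rpow_le_Gamma_add {a x : ℝ} (ha : 0 < a) (hx : 1 < x) :
    Gamma x * (x - 1) ^ a ≤ Gamma (x + a) := by
  have hx1 : 0 < x - 1 := by linarith
  have hΓx : 0 < Gamma x := Gamma_pos_of_pos (by linarith)
  -- slopes of `log ∘ Gamma` increase, and on `[x - 1, x]` the slope is `log (x - 1)`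
  have hslope := convexOn_log_Gamma.slope_mono_adjacent (x := x - 1) (y := x) (z := x + a)
    hx1 (show 0 < x + a by linarith) (by linarith) (by linarith)
  have hrec : Gamma x = (x - 1) * Gamma (x - 1) := by
    simpa using Gamma_add_one (s := x - 1) hx1.ne'
  have hΓx1 : 0 < Gamma (x - 1) := Gamma_pos_of_pos hx1
  simp only [Function.comp_apply, sub_sub_cancel, add_sub_cancel_left, div_one] at hslope
  rw [hrec, log_mul hx1.ne' hΓx1.ne', add_sub_cancel_right, le_div_iff₀ ha] at hslope
  rw [← log_le_log_iff (by positivity) (Gamma_pos_of_pos (by linarith)),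
    log_mul hΓx.ne' (rpow_pos_of_pos hx1 a).ne', log_rpow hx1, hrec, log_mul hx1.ne' hΓx1.ne']
  linarith

theorem summable_pow_div_Gamma {a : ℝ} (ha : 0 < a) (b x : ℝ) :
    Summable fun k : ℕ => x ^ k / Gamma (a * k + b) := by
  refine summable_of_ratio_norm_eventually_le (r := 1 / 2) (by norm_num) ?_
  have hlin : Filter.Tendsto (fun k : ℕ => a * k + b - 1) Filter.atTop Filter.atTop :=
    Filter.tendsto_atTop_add_const_right _ _
      (Filter.tendsto_atTop_add_const_right _ _ (tendsto_natCast_atTop_atTop.const_mul_atTop ha))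
  filter_upwards [hlin.eventually_gt_atTop 0,
    ((tendsto_rpow_atTop ha).comp hlin).eventually_ge_atTop (2 * |x|)] with k hk hgrowth
  have hΓ : 0 < Gamma (a * k + b) := Gamma_pos_of_pos (by linarith)
  have hratio : Gamma (a * k + b) * (2 * |x|) ≤ Gamma (a * ↑(k + 1) + b) := by
    calc Gamma (a * k + b) * (2 * |x|) ≤ Gamma (a * k + b) * (a * k + b - 1) ^ a :=
          mul_le_mul_of_nonneg_left hgrowth hΓ.le
      _ ≤ Gamma (a * k + b + a) := Gamma_mul_rpow_le_Gamma_add ha (by linarith)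
      _ = Gamma (a * ↑(k + 1) + b) := by push_cast; ring_nf
  have hΓ' : 0 < Gamma (a * ↑(k + 1) + b) := Gamma_pos_of_pos (by push_cast; linarith)
  simp only [norm_div, norm_pow, norm_eq_abs, abs_of_pos hΓ, abs_of_pos hΓ']
  rw [div_le_iff₀ hΓ']
  calc |x| ^ (k + 1)
        = 1 / 2 * (|x| ^ k / Gamma (a * k + b)) * (Gamma (a * k + b) * (2 * |x|)) := by
          field_simp; ring
    _ ≤ 1 / 2 * (|x| ^ k / Gamma (a * k + b)) * Gamma (a * ↑(k + 1) + b) := by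
          gcongr

theorem integral_rpow_mul_sub_rpow {p q t : ℝ} (hp : 0 < p) (hq : 0 < q) (ht : 0 < t) :
    ∫ s in (0:ℝ)..t, s ^ (p - 1) * (t - s) ^ (q - 1)
      = t ^ (p + q - 1) * (Gamma p * Gamma q / Gamma (p + q)) := by
  have hcomplex := Complex.betaIntegral_scaled p q ht
  rw [Complex.betaIntegral_eq_Gamma_mul_div _ _ (by simpa) (by simpa)] at hcomplex
  have hcongr : ∀ s ∈ Set.uIcc (0:ℝ) t, (s : ℂ) ^ ((p : ℂ) - 1) * ((t : ℂ) - s) ^ ((q : ℂ) - 1)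
      = ((s ^ (p - 1) * (t - s) ^ (q - 1) : ℝ) : ℂ) := by
    intro s hs
    rw [Set.uIcc_of_le ht.le] at hs
    push_cast
    rw [Complex.ofReal_cpow hs.1, Complex.ofReal_cpow (sub_nonneg.2 hs.2)]
    push_cast
    ring_nf
  rw [intervalIntegral.integral_congr hcongr, intervalIntegral.integral_ofReal] at hcomplex
  rw [← Complex.ofReal_inj, hcomplex]
  push_cast
  rw [Complex.ofReal_cpow ht.le, ← Complex.Gamma_ofReal, ← Complex.Gamma_ofReal,
    ← Complex.Gamma_ofReal]
  push_cast
  ring_nf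

theorem intervalIntegrable_rpow_mul_sub_rpow {p q t : ℝ} (hp : 0 < p) (hq : 0 < q) (ht : 0 < t) :
    IntervalIntegrable (fun s => s ^ (p - 1) * (t - s) ^ (q - 1)) volume 0 t := by
  -- a non-integrable function has integral `0`, while this one has a positive integral
  by_contra hint
  have hpos : 0 < t ^ (p + q - 1) * (Gamma p * Gamma q / Gamma (p + q)) :=
    mul_pos (rpow_pos_of_pos ht _) (div_pos (mul_pos (Gamma_pos_of_pos hp) (Gamma_pos_of_pos hq))
      (Gamma_pos_of_pos (add_pos hp hq)))
  rw [← integral_rpow_mul_sub_rpow hp hq ht, intervalIntegral.integral_undef hint] at hpos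
  exact hpos.false

section
variable {a t : ℝ}

theorem sub_rpow_mul_pow_div_Gamma_eqOn (κ : ℝ) (k : ℕ) (ht : 0 ≤ t) :
    Set.EqOn (fun s => (t - s) ^ (a - 1) * ((κ * s ^ a) ^ k / Gamma (a * k + 1)))
      (fun s => κ ^ k / Gamma (a * k + 1) * (s ^ ((a * k + 1) - 1) * (t - s) ^ (a - 1)))
      (Set.uIcc 0 t) := by
  intro s hs
  rw [Set.uIcc_of_le ht] at hs
  simp only [add_sub_cancel_right, mul_pow, ← rpow_natCast, ← rpow_mul hs.1]
  ring_nf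

theorem intervalIntegrable_sub_rpow_mul_pow_div_Gamma (κ : ℝ) (k : ℕ) (ha : 0 < a) (ht : 0 ≤ t) :
    IntervalIntegrable (fun s => (t - s) ^ (a - 1) * ((κ * s ^ a) ^ k / Gamma (a * k + 1)))
      volume 0 t := by
  rcases ht.eq_or_lt with rfl | ht
  · exact IntervalIntegrable.refl
  refine (intervalIntegrable_congr
    ((sub_rpow_mul_pow_div_Gamma_eqOn κ k ht.le).mono Set.uIoc_subset_uIcc)).mpr ?_
  exact (intervalIntegrable_rpow_mul_sub_rpow (by positivity) ha ht).const_mul _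

theorem integral_sub_rpow_mul_pow_div_Gamma (κ : ℝ) (k : ℕ) (ha : 0 < a) (ht : 0 ≤ t) :
    ∫ s in (0:ℝ)..t, (t - s) ^ (a - 1) * ((κ * s ^ a) ^ k / Gamma (a * k + 1))
      = Gamma a * t ^ a * ((κ * t ^ a) ^ k / Gamma (a * k + (a + 1))) := by
  rcases ht.eq_or_lt with rfl | ht
  · simp [zero_rpow ha.ne']
  have hΓ := (Gamma_pos_of_pos (show 0 < a * k + 1 by positivity)).ne'
  rw [intervalIntegral.integral_congr (sub_rpow_mul_pow_div_Gamma_eqOn κ k ht.le),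
    intervalIntegral.integral_const_mul, integral_rpow_mul_sub_rpow (by positivity) ha ht]
  rw [show a * k + 1 + a - 1 = a + a * k by ring, rpow_add ht, rpow_mul ht.le, rpow_natCast,
    show a * k + 1 + a = a * k + (a + 1) by ring]
  field_simp
  ring

theorem mittagLeffler_sub_one (ha : 0 < a) (x : ℝ) :
    mittagLeffler a x - 1 = ∑' k : ℕ, x ^ (k + 1) / Gamma (a * ↑(k + 1) + 1) := by
  rw [mittagLeffler, (summable_pow_div_Gamma ha 1 x).tsum_eq_zero_add]
  simp

theorem mul_integral_sub_rpow_mul_mittagLeffler (ha : 0 < a) (ht : 0 ≤ t) (κ : ℝ) :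
    κ * ∫ s in (0:ℝ)..t, (t - s) ^ (a - 1) * mittagLeffler a (κ * s ^ a)
      = Gamma a * (mittagLeffler a (κ * t ^ a) - 1) := by
  set F : ℕ → ℝ → ℝ := fun k s => (t - s) ^ (a - 1) * ((κ * s ^ a) ^ k / Gamma (a * k + 1))
  have hF_int (k : ℕ) : Integrable (F k) (volume.restrict (Set.Ioc 0 t)) :=
    (intervalIntegrable_iff_integrableOn_Ioc_of_le ht).mp
      (intervalIntegrable_sub_rpow_mul_pow_div_Gamma κ k ha ht)
  have hF_norm (k : ℕ) : ∫ s in Set.Ioc 0 t, ‖F k s‖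
      = Gamma a * t ^ a * ((|κ| * t ^ a) ^ k / Gamma (a * k + (a + 1))) := by
    rw [← integral_sub_rpow_mul_pow_div_Gamma |κ| k ha ht, intervalIntegral.integral_of_le ht]
    refine setIntegral_congr_fun measurableSet_Ioc fun s hs => ?_
    simp only [F, norm_mul, norm_div, norm_pow, norm_eq_abs,
      abs_of_nonneg (rpow_nonneg (sub_nonneg.2 hs.2) _), abs_of_nonneg (rpow_nonneg hs.1.le _),
      abs_of_pos (Gamma_pos_of_pos (by positivity : 0 < a * k + 1))]
  have hF_sum : Summable fun k => ∫ s in Set.Ioc 0 t, ‖F k s‖ := by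
    simp only [hF_norm]
    exact (summable_pow_div_Gamma ha (a + 1) _).mul_left _
  calc κ * ∫ s in (0:ℝ)..t, (t - s) ^ (a - 1) * mittagLeffler a (κ * s ^ a)
      = κ * ∑' k, ∫ s in (0:ℝ)..t, F k s := by
        simp only [intervalIntegral.integral_of_le ht,
          integral_tsum_of_summable_integral_norm hF_int hF_sum, F, mittagLeffler, tsum_mul_left]
    _ = ∑' k : ℕ, Gamma a * ((κ * t ^ a) ^ (k + 1) / Gamma (a * ↑(k + 1) + 1)) := by
        rw [← tsum_mul_left]
        congr 1 with k
        rw [integral_sub_rpow_mul_pow_div_Gamma κ k ha ht]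
        push_cast
        ring_nf
    _ = Gamma a * (mittagLeffler a (κ * t ^ a) - 1) := by
        rw [tsum_mul_left, mittagLeffler_sub_one ha]

end

theorem stmt_6_general (γ κ t : ℝ) (hγ1 : γ < 1) (hκ : 0 < κ)
    (ht : t ∈ Set.Icc (0:ℝ) 1) :
    ∫ s in (0:ℝ)..t, (t - s) ^ (-γ) * mittagLeffler (1 - γ) (κ * s ^ (1 - γ))
      ≤ (Real.Gamma (1 - γ) / κ) * mittagLeffler (1 - γ) (κ * t ^ (1 - γ)) := by
  have ha : 0 < 1 - γ := by linarith
  have hidentity := mul_integral_sub_rpow_mul_mittagLeffler ha ht.1 κ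
  rw [sub_sub_cancel_left] at hidentity
  rw [div_mul_eq_mul_div, le_div_iff₀ hκ, mul_comm, hidentity]
  exact mul_le_mul_of_nonneg_left (sub_le_self _ zero_le_one) (Gamma_pos_of_pos ha).le

theorem stmt_6 (γ κ t : ℝ) (hγ0 : 0 < γ) (hγ1 : γ < 1) (hκ : 0 < κ)
    (ht : t ∈ Set.Icc (0:ℝ) 1) :
    ∫ s in (0:ℝ)..t, (t - s) ^ (-γ) * mittagLeffler (1 - γ) (κ * s ^ (1 - γ))
      ≤ (Real.Gamma (1 - γ) / κ) * mittagLeffler (1 - γ) (κ * t ^ (1 - γ)) :=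
  stmt_6_general γ κ t hγ1 hκ ht
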